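/- Let 2/3 < α ≤ 1 and σ > 3(1−α)/2. There exist ε₀ > 0 and C > 0 such that for every real M ≥ 1, ∑_{n∈ℤ} ⟨n⟩^{−2σ} ∑ ⟨n₁⟩^{−α} ⟨n₂⟩^{−α} ⟨n₃⟩^{−α} ≤ C · M^{−ε₀}, where the inner sum ranges over all triples (n₁,n₂,n₃) ∈ ℤ³ with n₁ − n₂ + n₃ = n, n₂ ≠ n₁, n₂ ≠ n₃ and max(|n₁|,|n₂|,|n₃|) > M. -/

import Mathlib

/-!
On the tail one of the three frequencies exceeds `M`, so its weight satisfies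
`⟨nᵢ⟩^(-α) ≤ M^(-ε) ⟨nᵢ⟩^(-β)` with `β = α - ε`; for small `ε` we still have `2/3 < β` and
`3(1 - β) < 2σ`, and it remains to show that the full sum with exponent `β` is finite.
Summing out `n₁` and then `n₃` with the convolution bound
`∑ₖ ⟨k⟩^(-a) ⟨n - k⟩^(-b) ≲ ⟨n⟩^(-θ)` (valid for `0 ≤ θ ≤ a, b` and `θ < a + b - 1`, by Peetre's
inequality) leaves `∑ₙ ⟨n⟩^(-(β + θ₂))`, which converges.
-/

/-- The Japanese bracket `⟨x⟩ = (1 + x²)^(1/2)`. -/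
noncomputable def jb (x : ℝ) : ℝ := Real.sqrt (1 + x ^ 2)

open ENNReal

lemma one_le_jb (x : ℝ) : 1 ≤ jb x :=
  Real.one_le_sqrt.mpr (by nlinarith [sq_nonneg x])

lemma jb_pos (x : ℝ) : 0 < jb x := one_pos.trans_le (one_le_jb x)

lemma jb_sq (x : ℝ) : jb x ^ 2 = 1 + x ^ 2 :=
  Real.sq_sqrt (by positivity)

lemma abs_le_jb (x : ℝ) : |x| ≤ jb x :=
  Real.abs_le_sqrt (by linarith)

lemma jb_neg (x : ℝ) : jb (-x) = jb x := by simp [jb]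

lemma jb_add_le (x y : ℝ) : jb (x + y) ≤ jb x + jb y := by
  have hxy : x * y ≤ jb x * jb y := by
    calc x * y ≤ |x| * |y| := by rw [← abs_mul]; exact le_abs_self _
      _ ≤ jb x * jb y := mul_le_mul (abs_le_jb x) (abs_le_jb y) (abs_nonneg y) (jb_pos x).le
  rw [jb, Real.sqrt_le_left (add_pos (jb_pos x) (jb_pos y)).le]
  nlinarith [jb_sq x, jb_sq y]

lemma jb_add_rpow_le {θ : ℝ} (hθ : 0 ≤ θ) (x y : ℝ) :
    jb (x + y) ^ θ ≤ 2 ^ θ * (jb x ^ θ + jb y ^ θ) := by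
  have hmax : jb (x + y) ≤ 2 * max (jb x) (jb y) := by
    linarith [jb_add_le x y, le_max_left (jb x) (jb y), le_max_right (jb x) (jb y)]
  have hx := Real.rpow_nonneg (jb_pos x).le θ
  have hy := Real.rpow_nonneg (jb_pos y).le θ
  calc jb (x + y) ^ θ ≤ (2 * max (jb x) (jb y)) ^ θ :=
        Real.rpow_le_rpow (jb_pos _).le hmax hθ
    _ = 2 ^ θ * max (jb x) (jb y) ^ θ :=
        Real.mul_rpow zero_le_two (le_max_of_le_left (jb_pos x).le)
    _ ≤ 2 ^ θ * (jb x ^ θ + jb y ^ θ) := by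
        gcongr
        rcases max_cases (jb x) (jb y) with ⟨h, -⟩ | ⟨h, -⟩ <;> rw [h] <;> linarith

/-- `⟨n⟩^(-t)` in `ℝ≥0∞`, so that every sum below is meaningful without summability conditions. -/
noncomputable def jbWeight (t : ℝ) (n : ℤ) : ℝ≥0∞ := ENNReal.ofReal (jb n ^ (-t))

lemma jbWeight_zero (n : ℤ) : jbWeight 0 n = 1 := by
  simp [jbWeight]

lemma jbWeight_add (s t : ℝ) (n : ℤ) : jbWeight (s + t) n = jbWeight s n * jbWeight t n := by
  rw [jbWeight, jbWeight, jbWeight, ← ENNReal.ofReal_mul (Real.rpow_nonneg (jb_pos _).le _),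
    ← Real.rpow_add (jb_pos _), neg_add]

lemma jbWeight_neg (t : ℝ) (n : ℤ) : jbWeight t (-n) = jbWeight t n := by
  rw [jbWeight, jbWeight, Int.cast_neg, jb_neg]

lemma jbWeight_anti {s t : ℝ} (h : s ≤ t) (n : ℤ) : jbWeight t n ≤ jbWeight s n :=
  ENNReal.ofReal_le_ofReal (Real.rpow_le_rpow_of_exponent_le (one_le_jb _) (by linarith))

lemma jbWeight_le_of_jb_le {t : ℝ} (ht : 0 ≤ t) {k m : ℤ} (h : jb k ≤ jb m) :
    jbWeight t m ≤ jbWeight t k :=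
  ENNReal.ofReal_le_ofReal (Real.rpow_le_rpow_of_nonpos (jb_pos _) h (by linarith))

lemma jbWeight_le_ofReal_rpow_mul {t ε M : ℝ} (hε : 0 ≤ ε) (hM : 0 < M) {n : ℤ}
    (hn : M < |(n : ℝ)|) : jbWeight t n ≤ ENNReal.ofReal (M ^ (-ε)) * jbWeight (t - ε) n := by
  have hMn : jb n ^ (-ε) ≤ M ^ (-ε) :=
    Real.rpow_le_rpow_of_nonpos hM (hn.trans_le (abs_le_jb _)).le (by linarith)
  rw [show t = ε + (t - ε) by ring, jbWeight_add, add_sub_cancel_left, jbWeight]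
  gcongr

lemma tsum_jbWeight_ne_top {t : ℝ} (ht : 1 < t) : ∑' n : ℤ, jbWeight t n ≠ ∞ := by
  have hsum : Summable fun n : ℤ => jb n ^ (-t) := by
    refine Summable.of_norm_bounded_eventually (Real.summable_abs_int_rpow ht) ?_
    filter_upwards [(Set.finite_singleton (0 : ℤ)).compl_mem_cofinite] with n hn
    have hn0 : 0 < |(n : ℝ)| := abs_pos.mpr (Int.cast_ne_zero.mpr hn)
    rw [Real.norm_of_nonneg (Real.rpow_nonneg (jb_pos _).le _)]
    exact Real.rpow_le_rpow_of_nonpos hn0 (abs_le_jb _) (by linarith)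
  unfold jbWeight
  rw [← ENNReal.ofReal_tsum_of_nonneg (fun n => Real.rpow_nonneg (jb_pos _).le _) hsum]
  exact ENNReal.ofReal_ne_top

lemma jbWeight_mul_le_add {u v : ℝ} (hu : 0 ≤ u) (hv : 0 ≤ v) (k m : ℤ) :
    jbWeight u k * jbWeight v m ≤ jbWeight (u + v) k + jbWeight (u + v) m := by
  rcases le_total (jb k) (jb m) with h | h
  · calc jbWeight u k * jbWeight v m ≤ jbWeight u k * jbWeight v k := by
          gcongr; exact jbWeight_le_of_jb_le hv h
      _ ≤ _ := by rw [← jbWeight_add]; exact le_self_add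
  · calc jbWeight u k * jbWeight v m ≤ jbWeight u m * jbWeight v m := by
          gcongr; exact jbWeight_le_of_jb_le hu h
      _ ≤ _ := by rw [← jbWeight_add]; exact le_add_self

lemma tsum_jbWeight_mul_sub_le {u v : ℝ} (hu : 0 ≤ u) (hv : 0 ≤ v) (n : ℤ) :
    ∑' k, jbWeight u k * jbWeight v (n - k) ≤ 2 * ∑' k, jbWeight (u + v) k :=
  calc ∑' k, jbWeight u k * jbWeight v (n - k)
      ≤ ∑' k, (jbWeight (u + v) k + jbWeight (u + v) (n - k)) :=
        ENNReal.tsum_le_tsum fun k => jbWeight_mul_le_add hu hv k (n - k)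
    _ = 2 * ∑' k, jbWeight (u + v) k := by
        rw [ENNReal.tsum_add, two_mul, ← Equiv.tsum_eq (Equiv.subLeft n) (jbWeight (u + v))]
        rfl

lemma jbWeight_mul_le {θ : ℝ} (hθ : 0 ≤ θ) (a b : ℝ) (k m : ℤ) :
    jbWeight a k * jbWeight b m ≤ ENNReal.ofReal (2 ^ θ) * jbWeight θ (k + m) *
      (jbWeight (a - θ) k * jbWeight b m + jbWeight a k * jbWeight (b - θ) m) := by
  have hpeetre : jbWeight (-θ) (k + m) ≤
      ENNReal.ofReal (2 ^ θ) * (jbWeight (-θ) k + jbWeight (-θ) m) := by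
    simp only [jbWeight, neg_neg, Int.cast_add]
    rw [← ENNReal.ofReal_add (Real.rpow_nonneg (jb_pos _).le _) (Real.rpow_nonneg (jb_pos _).le _),
      ← ENNReal.ofReal_mul (by positivity)]
    exact ENNReal.ofReal_le_ofReal (jb_add_rpow_le hθ _ _)
  calc jbWeight a k * jbWeight b m
      = jbWeight θ (k + m) * jbWeight (-θ) (k + m) * (jbWeight a k * jbWeight b m) := by
        rw [← jbWeight_add, add_neg_cancel, jbWeight_zero, one_mul]
    _ ≤ jbWeight θ (k + m) * (ENNReal.ofReal (2 ^ θ) * (jbWeight (-θ) k + jbWeight (-θ) m)) *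
          (jbWeight a k * jbWeight b m) := by gcongr
    _ = ENNReal.ofReal (2 ^ θ) * jbWeight θ (k + m) *
          (jbWeight (-θ + a) k * jbWeight b m + jbWeight a k * jbWeight (-θ + b) m) := by
        simp only [jbWeight_add]; ring
    _ = _ := by rw [neg_add_eq_sub, neg_add_eq_sub]

theorem exists_tsum_jbWeight_mul_sub_le {a b θ : ℝ} (hθ : 0 ≤ θ) (ha : θ ≤ a) (hb : θ ≤ b)
    (hab : θ < a + b - 1) :
    ∃ C ≠ ∞, ∀ n : ℤ, ∑' k, jbWeight a k * jbWeight b (n - k) ≤ C * jbWeight θ n := by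
  set Z := ∑' k, jbWeight (a + b - θ) k
  have hZ : Z ≠ ∞ := tsum_jbWeight_ne_top (by linarith)
  refine ⟨ENNReal.ofReal (2 ^ θ) * (4 * Z), by finiteness, fun n => ?_⟩
  have hsplit := fun k => jbWeight_mul_le hθ a b k (n - k)
  simp only [add_sub_cancel] at hsplit
  calc ∑' k, jbWeight a k * jbWeight b (n - k)
      ≤ ∑' k, ENNReal.ofReal (2 ^ θ) * jbWeight θ n * (jbWeight (a - θ) k * jbWeight b (n - k) +
          jbWeight a k * jbWeight (b - θ) (n - k)) := ENNReal.tsum_le_tsum hsplit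
    _ = ENNReal.ofReal (2 ^ θ) * jbWeight θ n * (∑' k, jbWeight (a - θ) k * jbWeight b (n - k) +
          ∑' k, jbWeight a k * jbWeight (b - θ) (n - k)) := by
        rw [ENNReal.tsum_mul_left, ENNReal.tsum_add]
    _ ≤ ENNReal.ofReal (2 ^ θ) * jbWeight θ n * (2 * Z + 2 * Z) := by
        gcongr
        · simpa only [sub_add_eq_add_sub] using
            tsum_jbWeight_mul_sub_le (sub_nonneg.mpr ha) (hθ.trans hb) n
        · simpa only [← add_sub_assoc] using
            tsum_jbWeight_mul_sub_le (hθ.trans ha) (sub_nonneg.mpr hb) n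
    _ = ENNReal.ofReal (2 ^ θ) * (4 * Z) * jbWeight θ n := by ring

lemma tsum_jbWeight_trilinear_le {s β θ₁ θ₂ : ℝ} {C₁ C₂ : ℝ≥0∞}
    (h₁ : ∀ n : ℤ, ∑' k, jbWeight β k * jbWeight s (n - k) ≤ C₁ * jbWeight θ₁ n)
    (h₂ : ∀ n : ℤ, ∑' k, jbWeight β k * jbWeight θ₁ (n - k) ≤ C₂ * jbWeight θ₂ n) :
    ∑' p : ℤ × ℤ × ℤ, jbWeight s (p.1 - p.2.1 + p.2.2) *
        (jbWeight β p.1 * jbWeight β p.2.1 * jbWeight β p.2.2) ≤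
      C₁ * C₂ * ∑' n, jbWeight (β + θ₂) n := by
  have hsum₁ : ∀ n₂ n₃ : ℤ, ∑' n₁, jbWeight s (n₁ - n₂ + n₃) *
      (jbWeight β n₁ * jbWeight β n₂ * jbWeight β n₃) ≤
        jbWeight β n₂ * C₁ * (jbWeight β n₃ * jbWeight θ₁ (n₂ - n₃)) := by
    intro n₂ n₃
    calc ∑' n₁, jbWeight s (n₁ - n₂ + n₃) * (jbWeight β n₁ * jbWeight β n₂ * jbWeight β n₃)
        = jbWeight β n₂ * jbWeight β n₃ * ∑' n₁, jbWeight β n₁ * jbWeight s (n₂ - n₃ - n₁) := by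
          rw [← ENNReal.tsum_mul_left]
          refine tsum_congr fun n₁ => ?_
          rw [show n₂ - n₃ - n₁ = -(n₁ - n₂ + n₃) by ring, jbWeight_neg]
          ring
      _ ≤ jbWeight β n₂ * jbWeight β n₃ * (C₁ * jbWeight θ₁ (n₂ - n₃)) := by gcongr; exact h₁ _
      _ = _ := by ring
  have hsum₂ : ∀ n₂ : ℤ, ∑' n₃, jbWeight β n₂ * C₁ * (jbWeight β n₃ * jbWeight θ₁ (n₂ - n₃)) ≤
      C₁ * C₂ * jbWeight (β + θ₂) n₂ := by
    intro n₂
    rw [ENNReal.tsum_mul_left, jbWeight_add]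
    calc jbWeight β n₂ * C₁ * ∑' n₃, jbWeight β n₃ * jbWeight θ₁ (n₂ - n₃)
        ≤ jbWeight β n₂ * C₁ * (C₂ * jbWeight θ₂ n₂) := by gcongr; exact h₂ _
      _ = _ := by ring
  calc ∑' p : ℤ × ℤ × ℤ, jbWeight s (p.1 - p.2.1 + p.2.2) *
        (jbWeight β p.1 * jbWeight β p.2.1 * jbWeight β p.2.2)
      = ∑' n₂, ∑' n₃, ∑' n₁, jbWeight s (n₁ - n₂ + n₃) *
          (jbWeight β n₁ * jbWeight β n₂ * jbWeight β n₃) := by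
        rw [ENNReal.tsum_prod', ENNReal.tsum_comm]
        simp only [ENNReal.tsum_prod']
    _ ≤ ∑' n₂, ∑' n₃, jbWeight β n₂ * C₁ * (jbWeight β n₃ * jbWeight θ₁ (n₂ - n₃)) :=
        ENNReal.tsum_le_tsum fun n₂ => ENNReal.tsum_le_tsum fun n₃ => hsum₁ n₂ n₃
    _ ≤ ∑' n₂, C₁ * C₂ * jbWeight (β + θ₂) n₂ := ENNReal.tsum_le_tsum hsum₂
    _ = C₁ * C₂ * ∑' n, jbWeight (β + θ₂) n := ENNReal.tsum_mul_left

theorem tsum_jbWeight_trilinear_ne_top {s β : ℝ} (hβ : 2 / 3 < β) (hβ₁ : β ≤ 1)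
    (hs : 3 * (1 - β) < s) :
    ∑' p : ℤ × ℤ × ℤ, jbWeight s (p.1 - p.2.1 + p.2.2) *
        (jbWeight β p.1 * jbWeight β p.2.1 * jbWeight β p.2.2) ≠ ∞ := by
  -- `θ₁ > 2 - 2β` leaves room for `1 - β < θ₂ < β + θ₁ - 1`.
  set d := min (3 * β - 2) (s - 3 * (1 - β))
  have hd : 0 < d := lt_min (by linarith) (by linarith)
  have hd₁ : d ≤ 3 * β - 2 := min_le_left _ _
  have hd₂ : d ≤ s - 3 * (1 - β) := min_le_right _ _
  obtain ⟨C₁, hC₁, h₁⟩ := exists_tsum_jbWeight_mul_sub_le (a := β) (b := s)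
    (θ := 2 - 2 * β + d / 2) (by linarith) (by linarith) (by linarith) (by linarith)
  obtain ⟨C₂, hC₂, h₂⟩ := exists_tsum_jbWeight_mul_sub_le (a := β) (b := 2 - 2 * β + d / 2)
    (θ := 1 - β + d / 4) (by linarith) (by linarith) (by linarith) (by linarith)
  have hZ := tsum_jbWeight_ne_top (t := β + (1 - β + d / 4)) (by linarith)
  exact ne_top_of_le_ne_top (by finiteness) (tsum_jbWeight_trilinear_le h₁ h₂)

lemma jbWeight_mul_mul_le_of_lt_max {α ε M : ℝ} (hε : 0 ≤ ε) (hM : 0 < M) {a b c : ℤ}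
    (h : M < max |(a : ℝ)| (max |(b : ℝ)| |(c : ℝ)|)) :
    jbWeight α a * jbWeight α b * jbWeight α c ≤
      ENNReal.ofReal (M ^ (-ε)) *
        (jbWeight (α - ε) a * jbWeight (α - ε) b * jbWeight (α - ε) c) := by
  have hanti := jbWeight_anti (sub_le_self α hε)
  have hlarge := fun n => jbWeight_le_ofReal_rpow_mul (t := α) (n := n) hε hM
  rcases lt_max_iff.mp h with ha | hbc
  · grw [hlarge a ha, hanti b, hanti c]; exact le_of_eq (by ring)
  rcases lt_max_iff.mp hbc with hb | hc
  · grw [hlarge b hb, hanti a, hanti c]; exact le_of_eq (by ring)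
  · grw [hlarge c hc, hanti a, hanti b]; exact le_of_eq (by ring)

/-- Trilinear tail sum estimate for the renormalized cubic nonlinearity, `2/3 < α ≤ 1`. -/
theorem trilinear_tail_sum (α σ : ℝ) (hα₁ : 2 / 3 < α) (hα₂ : α ≤ 1)
    (hσ : 3 * (1 - α) / 2 < σ) :
    ∃ ε₀ > 0, ∃ C > 0, ∀ M : ℝ, 1 ≤ M →
      (∑' p : ℤ × ℤ × ℤ,
          if p.2.1 ≠ p.1 ∧ p.2.1 ≠ p.2.2 ∧
              M < max |(p.1 : ℝ)| (max |(p.2.1 : ℝ)| |(p.2.2 : ℝ)|) then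
            ENNReal.ofReal
              (jb ((p.1 - p.2.1 + p.2.2 : ℤ) : ℝ) ^ (-(2 * σ)) *
                (jb (p.1 : ℝ) ^ (-α) * jb (p.2.1 : ℝ) ^ (-α) * jb (p.2.2 : ℝ) ^ (-α)))
          else 0)
        ≤ ENNReal.ofReal (C * M ^ (-ε₀ : ℝ)) := by
  obtain ⟨ε, hε, hεlt⟩ := exists_between (lt_min (sub_pos.mpr hα₁)
    (show 0 < 2 * σ / 3 - (1 - α) by linarith))
  obtain ⟨hε₁, hε₂⟩ := lt_min_iff.mp hεlt
  set S := ∑' p : ℤ × ℤ × ℤ, jbWeight (2 * σ) (p.1 - p.2.1 + p.2.2) *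
    (jbWeight (α - ε) p.1 * jbWeight (α - ε) p.2.1 * jbWeight (α - ε) p.2.2)
  have hS : S ≠ ∞ := tsum_jbWeight_trilinear_ne_top (by linarith) (by linarith) (by linarith)
  refine ⟨ε, hε, S.toReal + 1, by positivity, fun M hM => ?_⟩
  have hMε : 0 ≤ M ^ (-ε) := Real.rpow_nonneg (by linarith) _
  have hnn := fun (x t : ℝ) => Real.rpow_nonneg (jb_pos x).le t
  calc _ ≤ ∑' p : ℤ × ℤ × ℤ, ENNReal.ofReal (M ^ (-ε)) * (jbWeight (2 * σ) (p.1 - p.2.1 + p.2.2) *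
          (jbWeight (α - ε) p.1 * jbWeight (α - ε) p.2.1 * jbWeight (α - ε) p.2.2)) := by
        refine ENNReal.tsum_le_tsum fun p => ?_
        split_ifs with hp
        · rw [ENNReal.ofReal_mul (hnn _ _), ENNReal.ofReal_mul (mul_nonneg (hnn _ _) (hnn _ _)),
            ENNReal.ofReal_mul (hnn _ _)]
          have htail := jbWeight_mul_mul_le_of_lt_max (α := α) hε.le (by linarith) hp.2.2
          exact (mul_le_mul_right htail _).trans_eq (mul_left_comm _ _ _)
        · exact zero_le
    _ = ENNReal.ofReal (M ^ (-ε)) * S := ENNReal.tsum_mul_left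
    _ ≤ ENNReal.ofReal (M ^ (-ε)) * ENNReal.ofReal (S.toReal + 1) := by
        gcongr
        exact (ENNReal.le_ofReal_iff_toReal_le hS (by positivity)).mpr (by linarith)
    _ = ENNReal.ofReal ((S.toReal + 1) * M ^ (-ε)) := by
        rw [← ENNReal.ofReal_mul hMε, mul_comm]
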